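/- Let a, b be nonzero complex numbers with |ab| < 1. Then a · f(a⁵b³, a⁻¹b) = (1/2)·[f(a,b) − f(−a,−b)], where a⁻¹ denotes the inverse of the nonzero complex number a. -/

import Mathlib

/-!
Since `n(n+1)/2 + n(n-1)/2 = n²`, the `n`-th term of `f(-a,-b)` is `(-1)ⁿ` times the `n`-th term
of `f(a,b)`, so `(f(a,b) - f(-a,-b))/2` is the sum of the terms of `f(a,b)` with odd index. The
term of index `2m+1` is `a` times the `m`-th term of `f(a⁵b³, a⁻¹b)`: both are
`a^((2m+1)(m+1)) b^((2m+1)m)`. Both tails of `f(a,b)` converge by the ratio test, the ratio of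
consecutive terms being `a^(n+1) bⁿ`.
-/

/-- Ramanujan's theta function `f(a,b) = ∑_{n ∈ ℤ} a^(n(n+1)/2) * b^(n(n-1)/2)`. -/
noncomputable def ramanujanTheta (a b : ℂ) : ℂ :=
  ∑' n : ℤ, a ^ (n * (n + 1) / 2) * b ^ (n * (n - 1) / 2)

open Filter Topology

theorem Int.two_mul_mul_add_one_ediv_two (n : ℤ) : 2 * (n * (n + 1) / 2) = n * (n + 1) :=
  Int.mul_ediv_cancel' (Int.even_mul_succ_self n).two_dvd

theorem Int.mul_add_one_ediv_two_eq {n k : ℤ} (h : n * (n + 1) = 2 * k) :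
    n * (n + 1) / 2 = k := by
  rw [h, Int.mul_ediv_cancel_left _ two_ne_zero]

theorem Int.mul_sub_one_ediv_two (n : ℤ) : n * (n - 1) / 2 = n * (n + 1) / 2 - n := by
  have h : n * (n - 1) = 2 * (n * (n + 1) / 2 - n) := by
    linear_combination -Int.two_mul_mul_add_one_ediv_two n
  rw [h, Int.mul_ediv_cancel_left _ two_ne_zero]

theorem neg_one_zpow_mul_neg_one_zpow_sub {K : Type*} [DivisionRing K] (p n : ℤ) :
    (-1 : K) ^ p * (-1) ^ (p - n) = (-1) ^ n := by
  rw [zpow_sub₀ (by norm_num), ← mul_div_assoc, ← sq, ← zpow_natCast, ← zpow_mul, mul_comm,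
    zpow_mul]
  norm_num
  rw [← inv_zpow, inv_neg_one]

theorem HasSum.comp_two_mul_add_one {K : Type*} [Field K] [TopologicalSpace K]
    [IsTopologicalRing K] [NeZero (2 : K)] {f : ℤ → K} {s t : K} (hs : HasSum f s)
    (ht : HasSum (fun n ↦ (-1) ^ n * f n) t) :
    HasSum (fun m ↦ f (2 * m + 1)) ((s - t) / 2) := by
  have hodd : HasSum (fun n ↦ if Odd n then f n else 0) ((s - t) / 2) := by
    convert (hs.sub ht).div_const 2 using 1
    funext n
    rcases Int.even_or_odd n with hn | hn
    · simp [hn.neg_one_zpow, Int.not_odd_iff_even.2 hn]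
    · simp only [hn, hn.neg_one_zpow, if_true]
      field_simp
      ring
  have hinj : Function.Injective (fun m : ℤ ↦ 2 * m + 1) := fun x y h ↦ by simpa using h
  have hsupp : ∀ n ∉ Set.range (fun m : ℤ ↦ 2 * m + 1), (if Odd n then f n else 0) = 0 := by
    rintro n hn
    refine if_neg ?_
    rintro ⟨m, rfl⟩
    exact hn ⟨m, by ring⟩
  exact ((hinj.hasSum_iff hsupp).2 hodd).congr_fun fun m ↦ by simp [odd_two_mul_add_one m]

noncomputable def ramanujanThetaTerm (a b : ℂ) (n : ℤ) : ℂ :=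
  a ^ (n * (n + 1) / 2) * b ^ (n * (n - 1) / 2)

namespace ramanujanThetaTerm

theorem eq_zpow_mul_zpow (a b : ℂ) (n : ℤ) :
    ramanujanThetaTerm a b n = a ^ (n * (n + 1) / 2) * b ^ (n * (n + 1) / 2 - n) := by
  rw [ramanujanThetaTerm, Int.mul_sub_one_ediv_two]

theorem neg (a b : ℂ) (n : ℤ) : ramanujanThetaTerm a b (-n) = ramanujanThetaTerm b a n := by
  rw [ramanujanThetaTerm, ramanujanThetaTerm, show -n * (-n + 1) = n * (n - 1) by ring,
    show -n * (-n - 1) = n * (n + 1) by ring, mul_comm]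

theorem add_one {a b : ℂ} (ha : a ≠ 0) (hb : b ≠ 0) (n : ℤ) :
    ramanujanThetaTerm a b (n + 1) = ramanujanThetaTerm a b n * (a ^ (n + 1) * b ^ n) := by
  have h : (n + 1) * (n + 1 + 1) / 2 = n * (n + 1) / 2 + (n + 1) :=
    Int.mul_add_one_ediv_two_eq (by linear_combination -Int.two_mul_mul_add_one_ediv_two n)
  rw [eq_zpow_mul_zpow, eq_zpow_mul_zpow, h, add_sub_cancel_right, zpow_add₀ ha,
    zpow_sub₀ hb]
  field_simp

theorem neg_neg (a b : ℂ) (n : ℤ) :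
    ramanujanThetaTerm (-a) (-b) n = (-1) ^ n * ramanujanThetaTerm a b n := by
  rw [eq_zpow_mul_zpow, eq_zpow_mul_zpow, neg_eq_neg_one_mul a, neg_eq_neg_one_mul b,
    mul_zpow, mul_zpow, mul_mul_mul_comm, neg_one_zpow_mul_neg_one_zpow_sub]

theorem two_mul_add_one {a b : ℂ} (ha : a ≠ 0) (hb : b ≠ 0) (m : ℤ) :
    ramanujanThetaTerm a b (2 * m + 1) = a * ramanujanThetaTerm (a ^ 5 * b ^ 3) (a⁻¹ * b) m := by
  rw [eq_zpow_mul_zpow, eq_zpow_mul_zpow]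
  set T := m * (m + 1) / 2
  have hT : 2 * T = m * (m + 1) := Int.two_mul_mul_add_one_ediv_two m
  have h : (2 * m + 1) * (2 * m + 1 + 1) / 2 = 1 + (5 * T + -(T - m)) :=
    Int.mul_add_one_ediv_two_eq (by linear_combination -4 * hT)
  rw [h, show 1 + (5 * T + -(T - m)) - (2 * m + 1) = 3 * T + (T - m) by ring, mul_zpow,
    mul_zpow, zpow_add₀ ha, zpow_add₀ ha, zpow_add₀ hb, zpow_mul, zpow_mul, inv_zpow', zpow_one]
  norm_cast
  ring

theorem summable_natCast {a b : ℂ} (ha : a ≠ 0) (hb : b ≠ 0) (hab : ‖a * b‖ < 1) :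
    Summable (fun n : ℕ ↦ ramanujanThetaTerm a b n) := by
  refine summable_of_ratio_norm_eventually_le (r := 1 / 2) (by norm_num) ?_
  have hlim : Tendsto (fun n : ℕ ↦ ‖a‖ * ‖a * b‖ ^ n) atTop (𝓝 0) := by
    simpa using (tendsto_pow_atTop_nhds_zero_of_lt_one (norm_nonneg _) hab).const_mul ‖a‖
  filter_upwards [hlim.eventually_lt_const (by norm_num : (0 : ℝ) < 1 / 2)] with n hn
  have hratio : ‖a ^ ((n : ℤ) + 1) * b ^ (n : ℤ)‖ = ‖a‖ * ‖a * b‖ ^ n := by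
    rw [zpow_add_one₀ ha, zpow_natCast, zpow_natCast, norm_mul, norm_mul, norm_pow, norm_pow,
      norm_mul, mul_pow]
    ring
  rw [Nat.cast_succ, add_one ha hb, norm_mul, hratio, mul_comm (1 / 2 : ℝ)]
  gcongr

theorem summable {a b : ℂ} (ha : a ≠ 0) (hb : b ≠ 0) (hab : ‖a * b‖ < 1) :
    Summable (ramanujanThetaTerm a b) :=
  .of_nat_of_neg (summable_natCast ha hb hab) <| by
    simpa only [neg] using summable_natCast hb ha (by rwa [mul_comm])

end ramanujanThetaTerm

theorem theta_odd_part (a b : ℂ) (ha : a ≠ 0) (hb : b ≠ 0)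
    (hab : ‖a * b‖ < 1) :
    a * ramanujanTheta (a ^ 5 * b ^ 3) (a⁻¹ * b) =
      (1 / 2) * (ramanujanTheta a b - ramanujanTheta (-a) (-b)) := by
  have hs : HasSum (ramanujanThetaTerm a b) (ramanujanTheta a b) :=
    (ramanujanThetaTerm.summable ha hb hab).hasSum
  have ht : HasSum (fun n ↦ (-1) ^ n * ramanujanThetaTerm a b n) (ramanujanTheta (-a) (-b)) :=
    (ramanujanThetaTerm.summable (neg_ne_zero.2 ha) (neg_ne_zero.2 hb)
      (by rwa [neg_mul_neg])).hasSum.congr_fun fun n ↦ (ramanujanThetaTerm.neg_neg a b n).symm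
  have hodd := (hs.comp_two_mul_add_one ht).congr_fun fun m ↦
    (ramanujanThetaTerm.two_mul_add_one ha hb m).symm
  calc _ = ∑' m, a * ramanujanThetaTerm (a ^ 5 * b ^ 3) (a⁻¹ * b) m := tsum_mul_left.symm
    _ = _ := by rw [hodd.tsum_eq]; ring
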